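/- arXiv:2409.03343 — 3 statements merged into one kernel-verified Lean document; each statement's English description precedes it below -/
import Mathlib

section
/- Let r > 0 and A > 0 be real numbers, and let e be a real-valued C² function defined on the open ball B(0,r) ⊂ ℝ² such that e > 0 on B(0,r), −Δe(x) ≤ A·e(x)² for all x ∈ B(0,r), e is integrable on B(0,r), and ∫_{B(0,r)} e dx ≤ π/(12A). Then e(0) ≤ (8/(π r²)) · ∫_{B(0,r)} e dx. -/
/-!
Heinz's trick. For `r' < r` let `x` maximise `(r' - ‖x‖)² e(x)` on the closed `r'`-ball and put
`δ = (r' - ‖x‖) / 2`; then `e ≤ 4 e(x)` on `B(x, δ)`, so `-Δe ≤ 16 A e(x)²` there, and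
`r'² e(0) ≤ 4 δ² e(x)`.

The mean value inequality `w(x₀) ≤ b ρ² / 8 + (π ρ²)⁻¹ ∫_{B(x₀, ρ)} w` for `-Δw ≤ b` comes from
polar coordinates: with `u(θ) = (cos θ, sin θ)` and `g(s) = ∫ w(x₀ + s u(θ)) dθ`, one has
`(s g'(s))' = s ∫ Δw(x₀ + s u(θ)) dθ`.
Applied on `B(x, s)` it gives `π s² e(x) / 2 ≤ ∫_{B(x, s)} e` as long as `16 A e(x)² s² ≤ 4 e(x)`;
the energy bound `π / (12 A)` prevents this constraint from binding before `s = δ`. Hence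
`π r'² e(0) ≤ 4 π δ² e(x) ≤ 8 ∫ e`, and `r' → r` finishes.
-/

open MeasureTheory Real

/-- The Euclidean Laplacian of a function `e : ℝ² → ℝ`, given by the sum of the
pure second derivatives in the coordinate directions. -/
noncomputable def euclideanLaplacian (e : EuclideanSpace ℝ (Fin 2) → ℝ)
    (x : EuclideanSpace ℝ (Fin 2)) : ℝ :=
  ∑ i : Fin 2,
    iteratedFDeriv ℝ 2 e x ![EuclideanSpace.single i 1, EuclideanSpace.single i 1]

open Set Metric intervalIntegral

local notation "ℝ²" => EuclideanSpace ℝ (Fin 2)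

noncomputable def polarUnit (θ : ℝ) : ℝ² :=
  cos θ • EuclideanSpace.single 0 1 + sin θ • EuclideanSpace.single 1 1

noncomputable def polarUnitPerp (θ : ℝ) : ℝ² :=
  (-sin θ) • EuclideanSpace.single 0 1 + cos θ • EuclideanSpace.single 1 1

theorem norm_polarUnit (θ : ℝ) : ‖polarUnit θ‖ = 1 := by
  simp [polarUnit, EuclideanSpace.norm_eq, Fin.sum_univ_two]

theorem hasDerivAt_polarUnit (θ : ℝ) : HasDerivAt polarUnit (polarUnitPerp θ) θ :=
  ((hasDerivAt_cos θ).smul_const _).add ((hasDerivAt_sin θ).smul_const _)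

theorem hasDerivAt_polarUnitPerp (θ : ℝ) : HasDerivAt polarUnitPerp (-polarUnit θ) θ := by
  rw [polarUnit, neg_add, ← neg_smul, ← neg_smul]
  exact ((hasDerivAt_sin θ).neg.smul_const _).add ((hasDerivAt_cos θ).smul_const _)

@[fun_prop]
theorem continuous_polarUnit : Continuous polarUnit :=
  continuous_iff_continuousAt.2 fun θ => (hasDerivAt_polarUnit θ).continuousAt

@[fun_prop]
theorem continuous_polarUnitPerp : Continuous polarUnitPerp :=
  continuous_iff_continuousAt.2 fun θ => (hasDerivAt_polarUnitPerp θ).continuousAt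

theorem polarUnit_neg_pi : polarUnit (-π) = polarUnit π := by simp [polarUnit]

theorem polarUnitPerp_neg_pi : polarUnitPerp (-π) = polarUnitPerp π := by simp [polarUnitPerp]

theorem apply_polarUnit_add_apply_polarUnitPerp (L : ℝ² →L[ℝ] ℝ² →L[ℝ] ℝ) (θ : ℝ) :
    L (polarUnit θ) (polarUnit θ) + L (polarUnitPerp θ) (polarUnitPerp θ) =
      ∑ i : Fin 2, L (EuclideanSpace.single i 1) (EuclideanSpace.single i 1) := by
  simp only [polarUnit, polarUnitPerp, map_add, map_smul, add_apply,
    smul_apply, smul_eq_mul, Fin.sum_univ_two]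
  linear_combination (L (EuclideanSpace.single 0 1) (EuclideanSpace.single 0 1) +
    L (EuclideanSpace.single 1 1) (EuclideanSpace.single 1 1)) * sin_sq_add_cos_sq θ

theorem euclideanLaplacian_eq_sum_fderiv_fderiv (e : ℝ² → ℝ) (x : ℝ²) :
    euclideanLaplacian e x =
      ∑ i : Fin 2,
        fderiv ℝ (fderiv ℝ e) x (EuclideanSpace.single i 1) (EuclideanSpace.single i 1) := by
  simp [euclideanLaplacian, iteratedFDeriv_two_apply]

theorem continuousOn_euclideanLaplacian {w : ℝ² → ℝ} {U : Set ℝ²} (hU : IsOpen U)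
    (hw : ContDiffOn ℝ 2 w U) : ContinuousOn (euclideanLaplacian w) U := by
  have hB := (hw.fderiv_of_isOpen (m := 1) hU le_rfl).continuousOn_fderiv_of_isOpen hU le_rfl
  simp_rw [funext (euclideanLaplacian_eq_sum_fderiv_fderiv w)]
  exact continuousOn_finsetSum _ fun i _ =>
    (hB.clm_apply continuousOn_const).clm_apply continuousOn_const

noncomputable def planeEquiv : ℝ × ℝ ≃ᵐ ℝ² :=
  MeasurableEquiv.finTwoArrow.symm.trans (MeasurableEquiv.toLp 2 (Fin 2 → ℝ))

theorem measurePreserving_planeEquiv : MeasurePreserving planeEquiv :=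
  ((EuclideanSpace.volume_preserving_symm_measurableEquiv_toLp (Fin 2)).symm _).comp
    ((volume_preserving_finTwoArrow ℝ).symm _)

theorem planeEquiv_polarCoord_symm (p : ℝ × ℝ) :
    planeEquiv (polarCoord.symm p) = p.1 • polarUnit p.2 := by
  ext i
  fin_cases i <;> simp [planeEquiv, polarUnit, polarCoord_symm_apply, MeasurableEquiv.finTwoArrow]

theorem integral_ball_zero_eq_integral_polar (f : ℝ² → ℝ) (ρ : ℝ) :
    ∫ x in ball (0 : ℝ²) ρ, f x =
      ∫ p in Ioo 0 ρ ×ˢ Ioo (-π) π, p.1 * f (p.1 • polarUnit p.2) := by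
  have hS : Ioo 0 ρ ×ˢ Ioo (-π) π = polarCoord.target ∩ Ioo 0 ρ ×ˢ Ioo (-π) π := by
    refine (inter_eq_self_of_subset_right ?_).symm
    rintro p ⟨hs, hθ⟩
    exact ⟨hs.1, hθ⟩
  rw [hS, ← setIntegral_indicator (measurableSet_Ioo.prod measurableSet_Ioo),
    ← MeasureTheory.integral_indicator measurableSet_ball,
    ← measurePreserving_planeEquiv.integral_comp',
    ← integral_comp_polarCoord_symm]
  refine setIntegral_congr_fun polarCoord.open_target.measurableSet fun p hp => ?_
  obtain ⟨hs, hθ⟩ := hp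
  have hmem : p.1 • polarUnit p.2 ∈ ball (0 : ℝ²) ρ ↔ p ∈ Ioo 0 ρ ×ˢ Ioo (-π) π := by
    simp [norm_smul, norm_polarUnit, abs_of_pos (mem_Ioi.1 hs), mem_Ioi.1 hs, hθ]
  rw [planeEquiv_polarCoord_symm, smul_eq_mul]
  by_cases h : p ∈ Ioo 0 ρ ×ˢ Ioo (-π) π
  · rw [indicator_of_mem h, indicator_of_mem (hmem.2 h)]
  · rw [indicator_of_notMem h, indicator_of_notMem (mt hmem.1 h), mul_zero]

theorem integral_ball_eq_intervalIntegral_polar {f : ℝ² → ℝ} {x₀ : ℝ²} {ρ : ℝ} (hρ : 0 ≤ ρ)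
    (hf : ContinuousOn f (closedBall x₀ ρ)) :
    ∫ x in ball x₀ ρ, f x = ∫ s in 0..ρ, ∫ θ in -π..π, s * f (x₀ + s • polarUnit θ) := by
  have htranslate : ∫ x in ball x₀ ρ, f x = ∫ x in ball (0 : ℝ²) ρ, f (x₀ + x) := by
    have hpre : (x₀ + ·) ⁻¹' ball x₀ ρ = ball (0 : ℝ²) ρ := by ext; simp [dist_eq_norm]
    rw [← hpre, (measurePreserving_add_left volume x₀).setIntegral_preimage_emb
      (Homeomorph.addLeft x₀).measurableEmbedding]
  have hint : IntegrableOn (fun p : ℝ × ℝ => p.1 * f (x₀ + p.1 • polarUnit p.2))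
      (Ioo 0 ρ ×ˢ Ioo (-π) π) := by
    refine (ContinuousOn.integrableOn_compact (isCompact_Icc.prod isCompact_Icc) ?_).mono_set
      (prod_mono Ioo_subset_Icc_self Ioo_subset_Icc_self)
    refine continuousOn_fst.mul (hf.comp (by fun_prop) fun p hp => ?_)
    simp [norm_smul, norm_polarUnit, abs_of_nonneg hp.1.1, hp.1.2]
  rw [htranslate, integral_ball_zero_eq_integral_polar, Measure.volume_eq_prod,
    setIntegral_prod _ hint, integral_of_le hρ, integral_Ioc_eq_integral_Ioo]
  refine setIntegral_congr_fun measurableSet_Ioo fun s _ => ?_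
  rw [integral_of_le (by linarith [pi_pos]), integral_Ioc_eq_integral_Ioo]

theorem hasDerivAt_intervalIntegral_of_continuousOn {E : Type*} [NormedAddCommGroup E]
    [NormedSpace ℝ E] {Φ Φ' : ℝ → ℝ → E} {s₀ ε a b : ℝ}
    (hΦ : ContinuousOn (Function.uncurry Φ) (closedBall s₀ ε ×ˢ uIcc a b))
    (hΦ' : ContinuousOn (Function.uncurry Φ') (closedBall s₀ ε ×ˢ uIcc a b))
    (hderiv : ∀ s ∈ ball s₀ ε, ∀ θ ∈ uIcc a b, HasDerivAt (Φ · θ) (Φ' s θ) s) (hε : 0 < ε) :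
    HasDerivAt (fun s => ∫ θ in a..b, Φ s θ) (∫ θ in a..b, Φ' s₀ θ) s₀ := by
  have slice {Ψ : ℝ → ℝ → E} (hΨ : ContinuousOn (Function.uncurry Ψ) (closedBall s₀ ε ×ˢ uIcc a b))
      {s : ℝ} (hs : s ∈ closedBall s₀ ε) : ContinuousOn (Ψ s) (uIcc a b) :=
    hΨ.comp (f := fun θ => (s, θ)) (by fun_prop) fun θ hθ => ⟨hs, hθ⟩
  have hs₀ : s₀ ∈ closedBall s₀ ε := mem_closedBall_self hε.le
  obtain ⟨C, hC⟩ :=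
    ((isCompact_closedBall s₀ ε).prod isCompact_uIcc).exists_bound_of_continuousOn hΦ'
  refine (hasDerivAt_integral_of_dominated_loc_of_deriv_le (bound := fun _ => C)
    (ball_mem_nhds s₀ hε) ?_ (slice hΦ hs₀).intervalIntegrable ?_ ?_ intervalIntegrable_const ?_).2
  · filter_upwards [ball_mem_nhds s₀ hε] with s hs
    exact ((slice hΦ (ball_subset_closedBall hs)).mono uIoc_subset_uIcc).aestronglyMeasurable
      measurableSet_uIoc
  · exact ((slice hΦ' hs₀).mono uIoc_subset_uIcc).aestronglyMeasurable measurableSet_uIoc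
  · exact ae_of_all _ fun θ hθ s hs =>
      hC (s, θ) ⟨ball_subset_closedBall hs, uIoc_subset_uIcc hθ⟩
  · exact ae_of_all _ fun θ hθ s hs => hderiv s hs θ (uIoc_subset_uIcc hθ)

theorem sub_le_of_hasDerivAt_of_deriv_ge {f f' : ℝ → ℝ} {ρ c : ℝ}
    (hf : ∀ s ∈ Icc 0 ρ, HasDerivAt f (f' s) s) (hf' : ∀ s ∈ Ioo 0 ρ, -(c * s) ≤ f' s) :
    ∀ s ∈ Icc 0 ρ, f 0 - c / 2 * s ^ 2 ≤ f s := by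
  have hmono : MonotoneOn (fun t => f t + c * t ^ 2 / 2) (Icc 0 ρ) := by
    have hderiv : ∀ s ∈ Icc 0 ρ, HasDerivAt (fun t => f t + c * t ^ 2 / 2) (f' s + c * s) s :=
      fun s hs =>
        ((hf s hs).add (((hasDerivAt_pow 2 s).const_mul c).div_const 2)).congr_deriv (by ring)
    refine monotoneOn_of_hasDerivWithinAt_nonneg (f' := fun s => f' s + c * s) (convex_Icc 0 ρ)
      (fun s hs => (hderiv s hs).continuousAt.continuousWithinAt) (fun s hs => ?_) (fun s hs => ?_)
    · rw [interior_Icc] at hs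
      exact (hderiv s (Ioo_subset_Icc_self hs)).hasDerivWithinAt
    · rw [interior_Icc] at hs
      linarith [hf' s hs]
  intro s hs
  have h : f 0 + c * 0 ^ 2 / 2 ≤ f s + c * s ^ 2 / 2 :=
    hmono (left_mem_Icc.2 (hs.1.trans hs.2)) hs hs.1
  linarith

theorem sub_le_of_hasDerivAt_mul_deriv_ge {g g' q : ℝ → ℝ} {ρ c : ℝ}
    (hg : ∀ s ∈ Icc 0 ρ, HasDerivAt g (g' s) s)
    (hq : ∀ s ∈ Icc 0 ρ, HasDerivAt (fun t => t * g' t) (q s) s)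
    (hq_ge : ∀ s ∈ Ioo 0 ρ, -(c * s) ≤ q s) :
    ∀ s ∈ Icc 0 ρ, g 0 - c / 4 * s ^ 2 ≤ g s := by
  have hflux := sub_le_of_hasDerivAt_of_deriv_ge hq hq_ge
  have hg'_ge : ∀ s ∈ Ioo 0 ρ, -(c / 2 * s) ≤ g' s := by
    intro s hs
    have h := hflux s (Ioo_subset_Icc_self hs)
    simp only [zero_mul, zero_sub] at h
    nlinarith [hs.1]
  intro s hs
  linarith [sub_le_of_hasDerivAt_of_deriv_ge hg hg'_ge s hs]

noncomputable def angularIntegral (w : ℝ² → ℝ) (x₀ : ℝ²) (s : ℝ) : ℝ :=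
  ∫ θ in -π..π, w (x₀ + s • polarUnit θ)

theorem angularIntegral_zero (w : ℝ² → ℝ) (x₀ : ℝ²) : angularIntegral w x₀ 0 = 2 * π * w x₀ := by
  simp only [angularIntegral, zero_smul, add_zero, intervalIntegral.integral_const, smul_eq_mul]
  ring

theorem hasDerivAt_add_smul_polarUnit (x₀ : ℝ²) (θ s : ℝ) :
    HasDerivAt (fun t : ℝ => x₀ + t • polarUnit θ) (polarUnit θ) s := by
  simpa using ((hasDerivAt_id s).smul_const (polarUnit θ)).const_add x₀

theorem hasDerivAt_add_smul_polarUnit_angle (x₀ : ℝ²) (s θ : ℝ) :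
    HasDerivAt (fun t : ℝ => x₀ + s • polarUnit t) (s • polarUnitPerp θ) θ :=
  ((hasDerivAt_polarUnit θ).const_smul s).const_add x₀

theorem exists_closedBall_le_four_mul {E : Type*} [NormedAddCommGroup E] [ProperSpace E]
    {f : E → ℝ} {r : ℝ} (hr : 0 < r) (hf : ContinuousOn f (closedBall 0 r))
    (hf_nonneg : ∀ y ∈ closedBall 0 r, 0 ≤ f y) (hf₀ : 0 < f 0) :
    ∃ x δ, 0 < δ ∧ ‖x‖ + 2 * δ = r ∧ r ^ 2 * f 0 ≤ 4 * δ ^ 2 * f x ∧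
      ∀ y ∈ closedBall x δ, f y ≤ 4 * f x := by
  obtain ⟨x, hx, hmax⟩ := (isCompact_closedBall (0 : E) r).exists_isMaxOn
    ⟨0, mem_closedBall_self hr.le⟩
    (((continuous_const.sub continuous_norm).pow 2).continuousOn.mul hf)
  rw [mem_closedBall, dist_zero_right] at hx
  have h₀ : r ^ 2 * f 0 ≤ (r - ‖x‖) ^ 2 * f x := by
    simpa using hmax (mem_closedBall_self hr.le)
  have hδ : 0 < (r - ‖x‖) / 2 := by
    by_contra! h
    have hx_eq : r - ‖x‖ = 0 := by linarith
    rw [hx_eq] at h₀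
    nlinarith [mul_pos (pow_pos hr 2) hf₀]
  refine ⟨x, (r - ‖x‖) / 2, hδ, by ring, by linarith, fun y hy => ?_⟩
  rw [mem_closedBall, dist_eq_norm] at hy
  have hy_norm : ‖y‖ ≤ ‖x‖ + (r - ‖x‖) / 2 := by
    linarith [norm_le_norm_add_norm_sub' y x]
  have hy_mem : y ∈ closedBall (0 : E) r := by
    rw [mem_closedBall, dist_zero_right]; linarith
  have hy_max : (r - ‖y‖) ^ 2 * f y ≤ (r - ‖x‖) ^ 2 * f x := hmax hy_mem
  have hweight : ((r - ‖x‖) / 2) ^ 2 ≤ (r - ‖y‖) ^ 2 := by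
    apply pow_le_pow_left₀ hδ.le; linarith
  have hfy := hf_nonneg y hy_mem
  have h : ((r - ‖x‖) / 2) ^ 2 * f y ≤ ((r - ‖x‖) / 2) ^ 2 * (4 * f x) := by
    nlinarith [mul_le_mul_of_nonneg_right hweight hfy]
  exact le_of_mul_le_mul_left h (by positivity)

section Polar

variable {X : Type*} [TopologicalSpace X] {w : ℝ² → ℝ} {x₀ : ℝ²} {R s : ℝ}

theorem add_smul_polarUnit_mem_ball (hs : |s| < R) (θ : ℝ) :
    x₀ + s • polarUnit θ ∈ ball x₀ R := by
  simpa [norm_smul, norm_polarUnit] using hs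

theorem ContinuousOn.comp_polar {G : ℝ² → X} (hG : ContinuousOn G (ball x₀ R)) :
    ContinuousOn (fun p : ℝ × ℝ => G (x₀ + p.1 • polarUnit p.2)) {p | |p.1| < R} :=
  hG.comp (by fun_prop) fun p hp => add_smul_polarUnit_mem_ball hp p.2

theorem ContinuousOn.continuous_comp_polar {G : ℝ² → X} (hG : ContinuousOn G (ball x₀ R))
    (hs : |s| < R) : Continuous fun θ => G (x₀ + s • polarUnit θ) :=
  continuousOn_univ.1 <|
    hG.comp (by fun_prop) fun θ _ => add_smul_polarUnit_mem_ball hs θ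

theorem hasDerivAt_integral_comp_polar {E : Type*} [NormedAddCommGroup E] [NormedSpace ℝ E]
    {G : ℝ² → E} {ℓ : ℝ → E →L[ℝ] ℝ} (hG : ContDiffOn ℝ 1 G (ball x₀ R)) (hℓ : Continuous ℓ)
    (hs : |s| < R) :
    HasDerivAt (fun t => ∫ θ in -π..π, ℓ θ (G (x₀ + t • polarUnit θ)))
      (∫ θ in -π..π, ℓ θ (fderiv ℝ G (x₀ + s • polarUnit θ) (polarUnit θ))) s := by
  set ε := (R - |s|) / 2
  have hε : 0 < ε := by simp only [ε]; linarith
  have hK : closedBall s ε ×ˢ uIcc (-π) π ⊆ {p : ℝ × ℝ | |p.1| < R} := by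
    rintro ⟨t, θ⟩ ⟨ht, -⟩
    rw [mem_closedBall, Real.dist_eq] at ht
    have := abs_sub_abs_le_abs_sub t s
    simp only [mem_ofPred_eq, ε] at ht ⊢
    linarith
  have hℓ' : ContinuousOn (fun p : ℝ × ℝ => ℓ p.2) {p | |p.1| < R} := by fun_prop
  refine hasDerivAt_intervalIntegral_of_continuousOn
    (Φ := fun t θ => ℓ θ (G (x₀ + t • polarUnit θ)))
    (Φ' := fun t θ => ℓ θ (fderiv ℝ G (x₀ + t • polarUnit θ) (polarUnit θ)))
    ((hℓ'.clm_apply hG.continuousOn.comp_polar).mono hK)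
    ((hℓ'.clm_apply ((hG.continuousOn_fderiv_of_isOpen isOpen_ball le_rfl).comp_polar.clm_apply
      (by fun_prop))).mono hK) (fun t ht θ hθ => ?_) hε
  have htθ : (t, θ) ∈ closedBall s ε ×ˢ uIcc (-π) π := ⟨ball_subset_closedBall ht, hθ⟩
  have hx := add_smul_polarUnit_mem_ball (x₀ := x₀) (hK htθ) θ
  exact (ℓ θ).hasFDerivAt.comp_hasDerivAt t
    (((hG.differentiableOn one_ne_zero).differentiableAt (isOpen_ball.mem_nhds hx)).hasFDerivAt
      |>.comp_hasDerivAt t (hasDerivAt_add_smul_polarUnit x₀ θ t))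

theorem hasDerivAt_angularIntegral (hw : ContDiffOn ℝ 1 w (ball x₀ R)) (hs : |s| < R) :
    HasDerivAt (angularIntegral w x₀)
      (∫ θ in -π..π, fderiv ℝ w (x₀ + s • polarUnit θ) (polarUnit θ)) s := by
  show HasDerivAt (fun t => ∫ θ in -π..π, w (x₀ + t • polarUnit θ)) _ s
  simpa using hasDerivAt_integral_comp_polar (ℓ := fun _ => ContinuousLinearMap.id ℝ ℝ) hw
    continuous_const hs

theorem hasDerivAt_integral_fderiv_polarUnit (hw : ContDiffOn ℝ 2 w (ball x₀ R)) (hs : |s| < R) :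
    HasDerivAt (fun t => ∫ θ in -π..π, fderiv ℝ w (x₀ + t • polarUnit θ) (polarUnit θ))
      (∫ θ in -π..π,
        fderiv ℝ (fderiv ℝ w) (x₀ + s • polarUnit θ) (polarUnit θ) (polarUnit θ)) s :=
  hasDerivAt_integral_comp_polar (ℓ := fun θ => ContinuousLinearMap.apply ℝ ℝ (polarUnit θ))
    (hw.fderiv_of_isOpen isOpen_ball le_rfl) (by fun_prop) hs

/-- The `θ`-derivative of `Dw(x₀ + s u(θ)) (u'(θ))` is `s D²w(u', u') - Dw(u)`, and it integrates
to zero over a period. -/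
theorem integral_fderiv_polarUnit_eq (hw : ContDiffOn ℝ 2 w (ball x₀ R)) (hs : |s| < R) :
    ∫ θ in -π..π, fderiv ℝ w (x₀ + s • polarUnit θ) (polarUnit θ) =
      s * ∫ θ in -π..π,
        fderiv ℝ (fderiv ℝ w) (x₀ + s • polarUnit θ) (polarUnitPerp θ) (polarUnitPerp θ) := by
  have hF : ContDiffOn ℝ 1 (fderiv ℝ w) (ball x₀ R) := hw.fderiv_of_isOpen isOpen_ball le_rfl
  have hB := hF.continuousOn_fderiv_of_isOpen isOpen_ball le_rfl
  have hderiv (θ : ℝ) : HasDerivAt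
      (fun t => fderiv ℝ w (x₀ + s • polarUnit t) (polarUnitPerp t))
      (s * fderiv ℝ (fderiv ℝ w) (x₀ + s • polarUnit θ) (polarUnitPerp θ) (polarUnitPerp θ) -
        fderiv ℝ w (x₀ + s • polarUnit θ) (polarUnit θ)) θ := by
    have hx := add_smul_polarUnit_mem_ball (x₀ := x₀) hs θ
    have hdiff := (hF.differentiableOn one_ne_zero).differentiableAt (isOpen_ball.mem_nhds hx)
    have hcurve := hdiff.hasFDerivAt.comp_hasDerivAt θ (hasDerivAt_add_smul_polarUnit_angle x₀ s θ)
    have h := hcurve.clm_apply (hasDerivAt_polarUnitPerp θ)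
    rw [map_smul, map_neg, smul_apply, smul_eq_mul, ← sub_eq_add_neg] at h
    exact h
  have hint₁ : IntervalIntegrable (fun θ => s *
      fderiv ℝ (fderiv ℝ w) (x₀ + s • polarUnit θ) (polarUnitPerp θ) (polarUnitPerp θ))
      volume (-π) π :=
    (continuous_const.mul (((hB.continuous_comp_polar hs).clm_apply (by fun_prop)).clm_apply
      (by fun_prop))).intervalIntegrable _ _
  have hint₂ : IntervalIntegrable (fun θ => fderiv ℝ w (x₀ + s • polarUnit θ) (polarUnit θ))
      volume (-π) π :=
    ((hF.continuousOn.continuous_comp_polar hs).clm_apply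
      continuous_polarUnit).intervalIntegrable _ _
  have hFTC := integral_eq_sub_of_hasDerivAt (fun θ _ => hderiv θ) (hint₁.sub hint₂)
  rw [polarUnit_neg_pi, polarUnitPerp_neg_pi, sub_self, integral_sub hint₁ hint₂,
    intervalIntegral.integral_const_mul] at hFTC
  linarith

theorem hasDerivAt_mul_integral_fderiv_polarUnit (hw : ContDiffOn ℝ 2 w (ball x₀ R))
    (hs : |s| < R) :
    HasDerivAt (fun t => t * ∫ θ in -π..π, fderiv ℝ w (x₀ + t • polarUnit θ) (polarUnit θ))
      (s * ∫ θ in -π..π, euclideanLaplacian w (x₀ + s • polarUnit θ)) s := by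
  have hB := (hw.fderiv_of_isOpen (m := 1) isOpen_ball le_rfl).continuousOn_fderiv_of_isOpen
    isOpen_ball le_rfl
  have hint {v : ℝ → ℝ²} (hv : Continuous v) : IntervalIntegrable
      (fun θ => fderiv ℝ (fderiv ℝ w) (x₀ + s • polarUnit θ) (v θ) (v θ)) volume (-π) π :=
    (((hB.continuous_comp_polar hs).clm_apply hv).clm_apply hv).intervalIntegrable _ _
  refine ((hasDerivAt_id s).mul (hasDerivAt_integral_fderiv_polarUnit hw hs)).congr_deriv ?_
  rw [integral_congr fun θ _ => (euclideanLaplacian_eq_sum_fderiv_fderiv w _).trans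
      (apply_polarUnit_add_apply_polarUnitPerp _ θ).symm,
    integral_add (hint continuous_polarUnit) (hint continuous_polarUnitPerp),
    integral_fderiv_polarUnit_eq hw hs, id]
  ring

theorem le_integral_ball_of_neg_laplacian_le {b ρ : ℝ} (hρ : 0 < ρ) (hρR : ρ < R)
    (hw : ContDiffOn ℝ 2 w (ball x₀ R)) (hΔ : ∀ x ∈ ball x₀ ρ, -euclideanLaplacian w x ≤ b) :
    w x₀ ≤ b * ρ ^ 2 / 8 + (π * ρ ^ 2)⁻¹ * ∫ x in ball x₀ ρ, w x := by
  have habs : ∀ s ∈ Icc 0 ρ, |s| < R := fun s hs => by rw [abs_of_nonneg hs.1]; linarith [hs.2]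
  have hg (s : ℝ) (hs : s ∈ Icc 0 ρ) := hasDerivAt_angularIntegral (hw.of_le one_le_two) (habs s hs)
  have hlaplacian : ∀ s ∈ Ioo 0 ρ,
      -(2 * π * b * s) ≤ s * ∫ θ in -π..π, euclideanLaplacian w (x₀ + s • polarUnit θ) := by
    intro s hs
    have hsρ : |s| < ρ := by rw [abs_of_pos hs.1]; exact hs.2
    have hint : ∫ θ in -π..π, -b ≤ ∫ θ in -π..π, euclideanLaplacian w (x₀ + s • polarUnit θ) :=
      integral_mono_on (by linarith [pi_pos]) intervalIntegrable_const
        (((continuousOn_euclideanLaplacian isOpen_ball hw).continuous_comp_polar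
          (habs s (Ioo_subset_Icc_self hs))).intervalIntegrable _ _)
        fun θ _ => neg_le.1 (hΔ _ (add_smul_polarUnit_mem_ball hsρ θ))
    rw [intervalIntegral.integral_const, smul_eq_mul] at hint
    nlinarith [hs.1]
  have hangular := sub_le_of_hasDerivAt_mul_deriv_ge hg
    (fun s hs => hasDerivAt_mul_integral_fderiv_polarUnit hw (habs s hs)) hlaplacian
  have hpolar : ∫ x in ball x₀ ρ, w x = ∫ s in 0..ρ, s * angularIntegral w x₀ s := by
    rw [integral_ball_eq_intervalIntegral_polar hρ.le
      (hw.continuousOn.mono (closedBall_subset_ball hρR))]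
    simp only [angularIntegral, intervalIntegral.integral_const_mul]
  have hlower : π * ρ ^ 2 * w x₀ - π * b * ρ ^ 4 / 8 ≤ ∫ s in 0..ρ, s * angularIntegral w x₀ s := by
    have hpoly (a c : ℝ) : ∫ s in 0..ρ, s * (a - c * s ^ 2) = a * ρ ^ 2 / 2 - c * ρ ^ 4 / 4 := by
      have h : (fun s : ℝ => s * (a - c * s ^ 2)) = fun s => a * s - c * s ^ 3 := by ext; ring
      rw [h, integral_sub (intervalIntegrable_id.const_mul a)
          ((intervalIntegrable_pow 3).const_mul c), intervalIntegral.integral_const_mul,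
        intervalIntegral.integral_const_mul, integral_id, integral_pow]
      ring
    calc π * ρ ^ 2 * w x₀ - π * b * ρ ^ 4 / 8
        = ∫ s in 0..ρ, s * (angularIntegral w x₀ 0 - 2 * π * b / 4 * s ^ 2) := by
          rw [hpoly, angularIntegral_zero]
          ring
      _ ≤ ∫ s in 0..ρ, s * angularIntegral w x₀ s := by
          refine integral_mono_on hρ.le ((by fun_prop : Continuous _).intervalIntegrable _ _)
            (ContinuousOn.intervalIntegrable ?_)
            fun s hs => mul_le_mul_of_nonneg_left (hangular s hs) hs.1
          rw [uIcc_of_le hρ.le]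
          exact continuousOn_id.mul fun s hs => (hg s hs).continuousAt.continuousWithinAt
  rw [← hpolar] at hlower
  have hπρ : 0 < π * ρ ^ 2 := by positivity
  rw [← sub_le_iff_le_add', le_inv_mul_iff₀ hπρ]
  linarith

theorem le_integral_ball_of_integral_lt {b δ : ℝ} (hb : 0 < b) (hδ : 0 < δ) (hδR : δ < R)
    (hw : ContDiffOn ℝ 2 w (ball x₀ R)) (hw_nonneg : ∀ x ∈ ball x₀ δ, 0 ≤ w x)
    (hΔ : ∀ x ∈ ball x₀ δ, -euclideanLaplacian w x ≤ b)
    (hsmall : ∫ x in ball x₀ δ, w x < 2 * π * w x₀ ^ 2 / b) :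
    π * δ ^ 2 * w x₀ / 2 ≤ ∫ x in ball x₀ δ, w x := by
  have hint : IntegrableOn w (ball x₀ δ) :=
    ((hw.continuousOn.mono (closedBall_subset_ball hδR)).integrableOn_compact
      (isCompact_closedBall x₀ δ)).mono_set ball_subset_closedBall
  have hI_nonneg : 0 ≤ ∫ x in ball x₀ δ, w x := setIntegral_nonneg measurableSet_ball hw_nonneg
  have hI_mono {s : ℝ} (hs : s ≤ δ) : ∫ x in ball x₀ s, w x ≤ ∫ x in ball x₀ δ, w x :=
    setIntegral_mono_set hint ((ae_restrict_iff' measurableSet_ball).2 (ae_of_all _ hw_nonneg))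
      (ball_subset_ball hs).eventuallyLE
  have hmean {s : ℝ} (hs : 0 < s) (hsδ : s ≤ δ) (hbs : b * s ^ 2 ≤ 4 * w x₀) :
      π * s ^ 2 * w x₀ / 2 ≤ ∫ x in ball x₀ s, w x := by
    have h := le_integral_ball_of_neg_laplacian_le hs (hsδ.trans_lt hδR) hw
      fun x hx => hΔ x (ball_subset_ball hsδ hx)
    have hπs : 0 < π * s ^ 2 := by positivity
    rw [← sub_le_iff_le_add', le_inv_mul_iff₀ hπs] at h
    nlinarith
  rcases (hw_nonneg x₀ (mem_ball_self hδ)).eq_or_lt with hw₀ | hw₀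
  · rw [← hw₀]; simpa using hI_nonneg
  by_cases hbδ : b * δ ^ 2 ≤ 4 * w x₀
  · exact hmean hδ le_rfl hbδ
  -- otherwise the ball of radius `√(4 w(x₀) / b) < δ` already carries energy `2π w(x₀)² / b`
  exfalso
  set s := √(4 * w x₀ / b)
  have hs_sq : s ^ 2 = 4 * w x₀ / b := sq_sqrt (by positivity)
  have hsδ : s < δ := by
    refine lt_of_pow_lt_pow_left₀ 2 hδ.le ?_
    rw [hs_sq, div_lt_iff₀ hb]; linarith
  have h := (hmean (by positivity) hsδ.le (by rw [hs_sq, mul_div_cancel₀ _ hb.ne'])).trans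
    (hI_mono hsδ.le)
  rw [hs_sq] at h
  have : 2 * π * w x₀ ^ 2 / b = π * (4 * w x₀ / b) * w x₀ / 2 := by ring
  linarith

theorem le_integral_ball_of_neg_laplacian_le_mul_sq {A δ : ℝ} (hA : 0 < A) (hδ : 0 < δ)
    (hw : ContDiffOn ℝ 2 w (ball x₀ (2 * δ))) (hw_pos : ∀ x ∈ ball x₀ δ, 0 < w x)
    (hΔ : ∀ x ∈ ball x₀ δ, -euclideanLaplacian w x ≤ A * w x ^ 2)
    (hw_le : ∀ x ∈ ball x₀ δ, w x ≤ 4 * w x₀) (hsmall : ∫ x in ball x₀ δ, w x ≤ π / (12 * A)) :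
    π * δ ^ 2 * w x₀ / 2 ≤ ∫ x in ball x₀ δ, w x := by
  have hw₀ := hw_pos x₀ (mem_ball_self hδ)
  refine le_integral_ball_of_integral_lt (b := 16 * A * w x₀ ^ 2) (by positivity) hδ (by linarith)
    hw (fun x hx => (hw_pos x hx).le) (fun x hx => ?_) (hsmall.trans_lt ?_)
  · have hsq : w x ^ 2 ≤ (4 * w x₀) ^ 2 := pow_le_pow_left₀ (hw_pos x hx).le (hw_le x hx) 2
    nlinarith [hΔ x hx, mul_le_mul_of_nonneg_left hsq hA.le]
  · rw [div_lt_div_iff₀ (by positivity) (by positivity)]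
    nlinarith [mul_pos (mul_pos pi_pos hA) (pow_pos hw₀ 2)]

end Polar

/-- Small-energy mean value estimate (Lemma 4.3.2 of McDuff–Salamon):
if `e` is a positive `C²` function on the open ball `B(0,r) ⊂ ℝ²` with
`-Δe ≤ A e²` and `∫_{B(0,r)} e ≤ π/(12A)`, then `e(0) ≤ (8/(π r²)) ∫_{B(0,r)} e`. -/
theorem small_energy_mean_value_estimate
    (r A : ℝ) (hr : 0 < r) (hA : 0 < A)
    (e : EuclideanSpace ℝ (Fin 2) → ℝ)
    (he : ContDiffOn ℝ 2 e (Metric.ball (0 : EuclideanSpace ℝ (Fin 2)) r))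
    (hpos : ∀ x ∈ Metric.ball (0 : EuclideanSpace ℝ (Fin 2)) r, 0 < e x)
    (hineq : ∀ x ∈ Metric.ball (0 : EuclideanSpace ℝ (Fin 2)) r,
      -(euclideanLaplacian e x) ≤ A * (e x) ^ 2)
    (hint : IntegrableOn e (Metric.ball (0 : EuclideanSpace ℝ (Fin 2)) r))
    (hsmall : ∫ x in Metric.ball (0 : EuclideanSpace ℝ (Fin 2)) r, e x ≤ π / (12 * A)) :
    e 0 ≤ (8 / (π * r ^ 2)) * ∫ x in Metric.ball (0 : EuclideanSpace ℝ (Fin 2)) r, e x := by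
  set I := ∫ x in ball (0 : ℝ²) r, e x
  have hclaim : ∀ r' ∈ Ioo 0 r, π * r' ^ 2 * e 0 ≤ 8 * I := by
    rintro r' ⟨hr', hr'r⟩
    have hsub : closedBall (0 : ℝ²) r' ⊆ ball 0 r := closedBall_subset_ball hr'r
    obtain ⟨x, δ, hδ, hxδ, h₀, hmax⟩ := exists_closedBall_le_four_mul hr'
      (he.continuousOn.mono hsub) (fun y hy => (hpos y (hsub hy)).le) (hpos 0 (mem_ball_self hr))
    have hball : ball x (2 * δ) ⊆ ball 0 r := fun y hy => by
      rw [mem_ball, dist_eq_norm] at hy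
      rw [mem_ball, dist_zero_right]
      linarith [norm_le_norm_add_norm_sub' y x]
    have hballδ : ball x δ ⊆ ball 0 r := (ball_subset_ball (by linarith)).trans hball
    have hIδ : ∫ y in ball x δ, e y ≤ I := setIntegral_mono_set hint
      ((ae_restrict_iff' measurableSet_ball).2 (ae_of_all _ fun y hy => (hpos y hy).le))
      hballδ.eventuallyLE
    have hlocal := le_integral_ball_of_neg_laplacian_le_mul_sq hA hδ (he.mono hball)
      (fun y hy => hpos y (hballδ hy)) (fun y hy => hineq y (hballδ hy))
      (fun y hy => hmax y (ball_subset_closedBall hy)) (hIδ.trans hsmall)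
    nlinarith [mul_le_mul_of_nonneg_left h₀ pi_pos.le]
  have hlim : π * r ^ 2 * e 0 ≤ 8 * I :=
    le_of_tendsto ((Continuous.tendsto (by fun_prop) r).mono_left nhdsWithin_le_nhds)
      (Filter.eventually_of_mem (Ioo_mem_nhdsLT hr) hclaim)
  rw [div_mul_eq_mul_div, le_div_iff₀ (by positivity)]
  linarith
end

section
/- Let (M,d) be a metric space, x ∈ M, r > 0, and let e : M → ℝ be a nonnegative function that is bounded above on the open metric ball B(x, r/2). Suppose σ₀ ∈ [0, r/2] maximizes the function σ ↦ (r − 2σ)² · sup_{B(x,σ)} e over σ ∈ [0, r/2] (with the convention that the supremum over the empty ball is 0). Set e₀ = sup_{B(x,σ₀)} e and ρ₀ = (r − 2σ₀)/4. Then σ₀ + ρ₀ ≤ r/2 and sup_{B(x, σ₀ + ρ₀)} e ≤ 4·e₀. -/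
/-!
At `σ₁ = σ₀ + ρ₀` the weight `(r - 2σ)²` is a quarter of its value at `σ₀`, so maximality of
`σ₀` bounds the supremum over `B(x, σ₁)` by four times the one over `B(x, σ₀)`. When
`σ₀ = r/2` the weight vanishes and gives nothing, but then `σ₁ = σ₀`.
-/

lemma le_four_mul_of_half_sq_mul_le {a s t : ℝ} (ha : 0 < a)
    (h : (a / 2) ^ 2 * s ≤ a ^ 2 * t) : s ≤ 4 * t := by
  have hscaled : a ^ 2 * (s / 4) ≤ a ^ 2 * t := by linarith
  linarith [le_of_mul_le_mul_left hscaled (by positivity)]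

theorem point_picking_estimate_general
    {M : Type*} [MetricSpace M] (x : M) (r : ℝ)
    (e : M → ℝ) (hnonneg : ∀ y, 0 ≤ e y)
    (σ₀ : ℝ) (hσ₀ : σ₀ ∈ Set.Icc 0 (r / 2))
    (hmax : ∀ σ ∈ Set.Icc 0 (r / 2),
      (r - 2 * σ) ^ 2 * sSup (e '' Metric.ball x σ) ≤
        (r - 2 * σ₀) ^ 2 * sSup (e '' Metric.ball x σ₀)) :
    σ₀ + (r - 2 * σ₀) / 4 ≤ r / 2 ∧
      sSup (e '' Metric.ball x (σ₀ + (r - 2 * σ₀) / 4)) ≤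
        4 * sSup (e '' Metric.ball x σ₀) := by
  obtain ⟨hσ₀_nonneg, hσ₀_le⟩ := hσ₀
  have hσ₁_le : σ₀ + (r - 2 * σ₀) / 4 ≤ r / 2 := by linarith
  refine ⟨hσ₁_le, ?_⟩
  rcases hσ₀_le.eq_or_lt with hσ₀_eq | hσ₀_lt
  · have hσ₁_eq : σ₀ + (r - 2 * σ₀) / 4 = σ₀ := by rw [hσ₀_eq]; ring
    have hsup_nonneg : 0 ≤ sSup (e '' Metric.ball x σ₀) :=
      Real.sSup_nonneg (by rintro _ ⟨y, _, rfl⟩; exact hnonneg y)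
    rw [hσ₁_eq]
    linarith
  · have hcompare := hmax _ ⟨by linarith, hσ₁_le⟩
    rw [show r - 2 * (σ₀ + (r - 2 * σ₀) / 4) = (r - 2 * σ₀) / 2 by ring] at hcompare
    exact le_four_mul_of_half_sq_mul_le (by linarith) hcompare

/-- Point-picking estimate (first step in the quantitative Schoen–Uhlenbeck
small-energy estimate): if `σ₀ ∈ [0, r/2]` maximizes `σ ↦ (r - 2σ)² · sup_{B(x,σ)} e`,
then with `e₀ = sup_{B(x,σ₀)} e` and `ρ₀ = (r - 2σ₀)/4` one has `σ₀ + ρ₀ ≤ r/2`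
and `sup_{B(x, σ₀ + ρ₀)} e ≤ 4 e₀`.  Suprema over balls are taken via `sSup` of
the image, which is `0` for the empty ball (the real `sSup` convention). -/
theorem point_picking_estimate
    {M : Type*} [MetricSpace M] (x : M) (r : ℝ) (hr : 0 < r)
    (e : M → ℝ) (hnonneg : ∀ y, 0 ≤ e y)
    (hbdd : BddAbove (e '' Metric.ball x (r / 2)))
    (σ₀ : ℝ) (hσ₀ : σ₀ ∈ Set.Icc 0 (r / 2))
    (hmax : ∀ σ ∈ Set.Icc 0 (r / 2),
      (r - 2 * σ) ^ 2 * sSup (e '' Metric.ball x σ) ≤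
        (r - 2 * σ₀) ^ 2 * sSup (e '' Metric.ball x σ₀)) :
    σ₀ + (r - 2 * σ₀) / 4 ≤ r / 2 ∧
      sSup (e '' Metric.ball x (σ₀ + (r - 2 * σ₀) / 4)) ≤
        4 * sSup (e '' Metric.ball x σ₀) :=
  point_picking_estimate_general x r e hnonneg σ₀ hσ₀ hmax
end

section
/- Let E be a real inner product space, let R be an algebraic curvature tensor on E, let J be a compatible complex structure for R, and let K̄ > 0. If R has sectional curvature at most K̄, then for all X, Y ∈ E the holomorphic bisectional curvature numerator satisfies R(X, JX, JY, Y) ≤ 2 K̄ · |X|² · |Y|². -/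
open RealInnerProductSpace

/-- If an algebraic curvature tensor `R` on a real inner product space `E`, with a
compatible complex structure `J`, has sectional curvature at most `K̄ > 0`, then its
holomorphic bisectional curvature numerator satisfies
`R(X, JX, JY, Y) ≤ 2 K̄ ‖X‖² ‖Y‖²` for all `X, Y`. -/
theorem bisectional_le_of_sectional_le
    {E : Type*} [NormedAddCommGroup E] [InnerProductSpace ℝ E]
    (R : E →ₗ[ℝ] E →ₗ[ℝ] E →ₗ[ℝ] E →ₗ[ℝ] ℝ)
    (hanti₁ : ∀ X Y Z W : E, R X Y Z W = -R Y X Z W)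
    (hanti₂ : ∀ X Y Z W : E, R X Y Z W = -R X Y W Z)
    (hsymm : ∀ X Y Z W : E, R X Y Z W = R Z W X Y)
    (hbianchi : ∀ X Y Z W : E, R X Y Z W + R Y Z X W + R Z X Y W = 0)
    (J : E →ₗ[ℝ] E)
    (hJ : ∀ v : E, J (J v) = -v)
    (hJinner : ∀ v w : E, ⟪J v, J w⟫ = ⟪v, w⟫)
    (hKahler : ∀ X Y Z W : E, R (J X) (J Y) Z W = R X Y Z W)
    (K : ℝ) (hK : 0 < K)
    (hsec : ∀ X Y : E, R X Y Y X ≤ K * (‖X‖ ^ 2 * ‖Y‖ ^ 2 - ⟪X, Y⟫ ^ 2)) :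
    ∀ X Y : E, R X (J X) (J Y) Y ≤ 2 * K * ‖X‖ ^ 2 * ‖Y‖ ^ 2 := by
  intro X Y
  have hb := hbianchi X (J X) (J Y) Y
  have h1 : R (J X) (J Y) X Y = -R X Y Y X := by
    rw [hKahler, hanti₂]
  have h2 : R (J Y) X (J X) Y = -R (J X) Y Y (J X) := by
    have hX : X = -(J (J X)) := by rw [hJ, neg_neg]
    calc R (J Y) X (J X) Y = R (J Y) (-(J (J X))) (J X) Y := by rw [← hX]
      _ = -R (J Y) (J (J X)) (J X) Y := by
          rw [map_neg]; simp
      _ = -R Y (J X) (J X) Y := by rw [hKahler]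
      _ = -R (J X) Y Y (J X) := by rw [hsymm (J X) Y Y (J X)]
  have key : R X (J X) (J Y) Y = R X Y Y X + R (J X) Y Y (J X) := by
    rw [h1, h2] at hb; linarith
  have hJX : ‖J X‖ ^ 2 = ‖X‖ ^ 2 := by
    have := hJinner X X
    rw [real_inner_self_eq_norm_sq, real_inner_self_eq_norm_sq] at this
    exact this
  have s1 := hsec X Y
  have s2 := hsec (J X) Y
  rw [hJX] at s2
  have q1 : (0:ℝ) ≤ ⟪X, Y⟫ ^ 2 := sq_nonneg _
  have q2 : (0:ℝ) ≤ ⟪J X, Y⟫ ^ 2 := sq_nonneg _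
  nlinarith
end
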